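/- arXiv:1802.02403 — 2 statements merged into one kernel-verified Lean document; each statement's English description precedes it below -/
import Mathlib

section
/- Define for δ > 0 and integer k ≥ 0 the value p_k = P_∞(δ + k/2), where P_∞(x) = Z (x^H + K^H)^{a(ε−1)/H} x^{a−1} e^{−x/b}. Then there exist positive constants A(δ), B(δ) such that A(δ) ≤ P_∞(x)/p_k ≤ B(δ) for all x ∈ (δ + k/2, δ + (k+1)/2] and all integers k ≥ 0. -/
open Real Set

/- Write y = δ + k/2 ≥ δ. For y < x ≤ y + 1/2 we have |log x - log y| ≤ 1/(2δ). In logarithmic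
coordinates every factor of P∞ is Lipschitz: log (x^H + K^H) has slope at most |H| in log x (adding
K^H > 0 only damps ratios), log x^(a-1) has slope a - 1 in log x, and log e^(-x/b) has slope 1/b in x.
Hence |log P∞(x) - log P∞(y)| ≤ C with C independent of k, and A = e^(-C), B = e^C. -/

lemma log_add_sub_log_add_le {p p' q : ℝ} (hp : 0 < p) (hpp' : p ≤ p') (hq : 0 ≤ q) :
    log (p' + q) - log (p + q) ≤ log p' - log p := by
  have hp' : 0 < p' := hp.trans_le hpp'
  have key : log ((p' + q) * p) ≤ log (p' * (p + q)) :=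
    log_le_log (by positivity) (by nlinarith)
  rw [log_mul (by positivity) hp.ne', log_mul (by positivity) (by positivity)] at key
  linarith

lemma abs_log_add_sub_log_add_le {p p' q : ℝ} (hp : 0 < p) (hp' : 0 < p') (hq : 0 ≤ q) :
    |log (p + q) - log (p' + q)| ≤ |log p - log p'| := by
  rcases le_total p p' with h | h
  · have hmono : log (p + q) ≤ log (p' + q) := log_le_log (by positivity) (by linarith)
    rw [abs_sub_comm, abs_of_nonneg (by linarith), abs_sub_comm,
      abs_of_nonneg (by linarith [log_le_log hp h])]
    exact log_add_sub_log_add_le hp h hq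
  · have hmono : log (p' + q) ≤ log (p + q) := log_le_log (by positivity) (by linarith)
    rw [abs_of_nonneg (by linarith), abs_of_nonneg (by linarith [log_le_log hp' h])]
    exact log_add_sub_log_add_le hp' h hq

lemma abs_log_sub_log_le_div {δ h x y : ℝ} (hδ : 0 < δ) (hy : δ ≤ y) (hyx : y ≤ x)
    (hx : x ≤ y + h) : |log x - log y| ≤ h / δ := by
  have hy0 : 0 < y := hδ.trans_le hy
  have hx0 : 0 < x := hy0.trans_le hyx
  rw [← log_div hx0.ne' hy0.ne', abs_of_nonneg (log_nonneg ((one_le_div hy0).2 hyx))]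
  calc log (x / y) ≤ x / y - 1 := log_le_sub_one_of_pos (by positivity)
    _ = (x - y) / y := by field_simp
    _ ≤ h / δ := div_le_div₀ (by linarith) (by linarith) hδ hy

noncomputable def stationaryDensity (Z K c a b : ℝ) (H : ℤ) (x : ℝ) : ℝ :=
  Z * (x ^ H + K ^ H) ^ c * x ^ (a - 1) * exp (-x / b)

section stationaryDensity

variable {Z K c a b x y : ℝ} {H : ℤ}

lemma stationaryDensity_pos (hZ : 0 < Z) (hK : 0 < K) (hx : 0 < x) :
    0 < stationaryDensity Z K c a b H x := by
  unfold stationaryDensity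
  positivity

lemma log_stationaryDensity (hZ : 0 < Z) (hK : 0 < K) (hx : 0 < x) :
    log (stationaryDensity Z K c a b H x) =
      log Z + c * log (x ^ H + K ^ H) + (a - 1) * log x - x / b := by
  unfold stationaryDensity
  rw [log_mul (by positivity) (exp_pos _).ne', log_mul (by positivity) (by positivity),
    log_mul hZ.ne' (by positivity), log_rpow (by positivity), log_rpow hx, log_exp]
  ring

lemma abs_log_stationaryDensity_sub_le (hZ : 0 < Z) (hK : 0 < K) (hx : 0 < x) (hy : 0 < y) :
    |log (stationaryDensity Z K c a b H x) - log (stationaryDensity Z K c a b H y)| ≤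
      (|c| * |(H : ℝ)| + |a - 1|) * |log x - log y| + |x - y| / |b| := by
  have hK' : |log (x ^ H + K ^ H) - log (y ^ H + K ^ H)| ≤ |(H : ℝ)| * |log x - log y| := by
    calc _ ≤ |log (x ^ H) - log (y ^ H)| :=
          abs_log_add_sub_log_add_le (by positivity) (by positivity) (by positivity)
      _ = |(H : ℝ)| * |log x - log y| := by
          rw [log_zpow, log_zpow, ← mul_sub, abs_mul]
  rw [log_stationaryDensity hZ hK hx, log_stationaryDensity hZ hK hy]
  calc _ = |c * (log (x ^ H + K ^ H) - log (y ^ H + K ^ H)) + (a - 1) * (log x - log y)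
          - (x - y) / b| := by ring_nf
    _ ≤ |c| * |log (x ^ H + K ^ H) - log (y ^ H + K ^ H)| + |a - 1| * |log x - log y|
          + |x - y| / |b| := by
        rw [← abs_mul, ← abs_mul, ← abs_div]
        exact (abs_sub _ _).trans (by gcongr; exact abs_add_le _ _)
    _ ≤ |c| * (|(H : ℝ)| * |log x - log y|) + |a - 1| * |log x - log y| + |x - y| / |b| := by
        gcongr
    _ = _ := by ring

end stationaryDensity

lemma exp_neg_le_div_and_div_le_exp {u v C : ℝ} (hu : 0 < u) (hv : 0 < v)
    (h : |log u - log v| ≤ C) : exp (-C) ≤ u / v ∧ u / v ≤ exp C := by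
  rw [← exp_log (div_pos hu hv), log_div hu.ne' hv.ne', exp_le_exp, exp_le_exp]
  exact ⟨by linarith [neg_abs_le (log u - log v)], (le_abs_self _).trans h⟩

theorem stmt_8_general (a b K Z ε δ : ℝ) (H : ℤ) (P : ℝ → ℝ)
    (hK : 0 < K) (hZ : 0 < Z) (hδ : 0 < δ)
    (hP : ∀ x : ℝ,
      P x = Z * (x ^ H + K ^ H) ^ (a * (ε - 1) / (H : ℝ)) * x ^ (a - 1) * Real.exp (-x / b)) :
    ∃ A B : ℝ, 0 < A ∧ 0 < B ∧
      ∀ k : ℕ, ∀ x ∈ Ioc (δ + k / 2) (δ + (k + 1) / 2),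
        A ≤ P x / P (δ + k / 2) ∧ P x / P (δ + k / 2) ≤ B := by
  obtain rfl : P = stationaryDensity Z K (a * (ε - 1) / H) a b H := funext hP
  set C := (|a * (ε - 1) / H| * |(H : ℝ)| + |a - 1|) * (1 / 2 / δ) + 1 / 2 / |b| with hC
  refine ⟨exp (-C), exp C, exp_pos _, exp_pos _, fun k x ⟨hlo, hhi⟩ ↦ ?_⟩
  set y : ℝ := δ + k / 2
  have hδy : δ ≤ y := le_add_of_nonneg_right (by positivity)
  have hy : 0 < y := hδ.trans_le hδy
  have hxy : x ≤ y + 1 / 2 := by linarith [show y + 1 / 2 = δ + (k + 1) / 2 by ring]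
  refine exp_neg_le_div_and_div_le_exp (stationaryDensity_pos hZ hK (hy.trans hlo))
    (stationaryDensity_pos hZ hK hy) ?_
  refine (abs_log_stationaryDensity_sub_le hZ hK (hy.trans hlo) hy).trans ?_
  rw [hC]
  gcongr
  · exact abs_log_sub_log_le_div hδ hδy hlo.le hxy
  · rw [abs_of_nonneg (by linarith)]
    linarith

theorem stmt_8 (a b K Z ε δ : ℝ) (H : ℤ) (P : ℝ → ℝ)
    (ha : 0 < a) (hb : 0 < b) (hK : 0 < K) (hZ : 0 < Z) (hδ : 0 < δ)
    (hε0 : 0 < ε) (hε1 : ε ≤ 1) (hH : H ≠ 0)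
    (hP : ∀ x : ℝ,
      P x = Z * (x ^ H + K ^ H) ^ (a * (ε - 1) / (H : ℝ)) * x ^ (a - 1) * Real.exp (-x / b)) :
    ∃ A B : ℝ, 0 < A ∧ 0 < B ∧
      ∀ k : ℕ, ∀ x ∈ Ioc (δ + k / 2) (δ + (k + 1) / 2),
        A ≤ P x / P (δ + k / 2) ∧ P x / P (δ + k / 2) ≤ B :=
  stmt_8_general a b K Z ε δ H P hK hZ hδ hP
end

section
/- Let m_k = p_k e^{(δ+k/2)/(2b)} where p_k = Z((δ+k/2)^H+K^H)^{a(ε−1)/H}(δ+k/2)^{a−1}e^{−(δ+k/2)/b}, and let M_j = ∑_{k=1}^{j−1} 1/m_k. Then there exists C > 0 such that m_k ∑_{j=k+1}^∞ M_j p_j ≤ C p_k for all k ∈ ℕ. -/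
/-!
Write `x_k = δ + k/2`. Then `m_k = f(x_k) x_k^(a-1) e^(-x_k/(2b))` with `f` antitone (because
`ε ≤ 1`), and since `x^(a-1)` grows subexponentially, `m_j ≤ C r^(j-i) m_i` for `i ≤ j` with
`r = e^(-1/(8b)) < 1`. Hence `M_j m_j = ∑_{i<j} m_j / m_i` is bounded by a geometric series. Since
`p_j / m_j = e^(-x_j/(2b))` is itself geometric in `j`, the tail `∑_{j>k} M_j p_j` is at most a
constant times `e^(-x_k/(2b)) = p_k / m_k`.
-/

open Real Finset

lemma one_add_rpow_le_mul_exp {c l : ℝ} (hc : 0 < c) (hl : 0 < l) {u : ℝ} (hu : 0 ≤ u) :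
    (1 + u) ^ c ≤ (1 + c / l) ^ c * exp (l * u) := by
  have hlin : 1 + u ≤ (1 + c / l) * (1 + l / c * u) := by
    have : (1 + c / l) * (1 + l / c * u) = 1 + u + c / l + l / c * u := by field_simp; ring
    rw [this]; have := div_pos hc hl; have := div_pos hl hc; nlinarith
  calc (1 + u) ^ c ≤ ((1 + c / l) * exp (l / c * u)) ^ c := by
        gcongr
        exact hlin.trans (by gcongr; linarith [add_one_le_exp (l / c * u)])
    _ = (1 + c / l) ^ c * exp (l * u) := by
        rw [mul_rpow (by positivity) (exp_pos _).le, ← exp_mul]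
        congr 2; field_simp

lemma exists_rpow_le_mul_exp_mul_rpow (c : ℝ) {δ l : ℝ} (hδ : 0 < δ) (hl : 0 < l) :
    ∃ C > 0, ∀ x y, δ ≤ x → x ≤ y → y ^ c ≤ C * exp (l * (y - x)) * x ^ c := by
  rcases le_or_gt c 0 with hc | hc
  · refine ⟨1, one_pos, fun x y hx hxy => ?_⟩
    calc y ^ c ≤ x ^ c := rpow_le_rpow_of_nonpos (by linarith) hxy hc
      _ ≤ 1 * exp (l * (y - x)) * x ^ c := by
          rw [one_mul]
          exact le_mul_of_one_le_left (rpow_nonneg (by linarith) c) (one_le_exp (by nlinarith))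
  · refine ⟨(1 + c / (l * δ)) ^ c, by positivity, fun x y hx hxy => ?_⟩
    have hx0 : 0 < x := by linarith
    have hyx : 0 ≤ (y - x) / x := div_nonneg (by linarith) hx0.le
    calc y ^ c = (x * (1 + (y - x) / x)) ^ c := by congr 1; field_simp; ring
      _ = x ^ c * (1 + (y - x) / x) ^ c := mul_rpow hx0.le (by linarith)
      _ ≤ x ^ c * (1 + (y - x) / δ) ^ c := by gcongr
      _ ≤ x ^ c * ((1 + c / (l * δ)) ^ c * exp (l * δ * ((y - x) / δ))) := by
          gcongr; exact one_add_rpow_le_mul_exp hc (by positivity) (div_nonneg (by linarith) hδ.le)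
      _ = (1 + c / (l * δ)) ^ c * exp (l * (y - x)) * x ^ c := by
          field_simp

lemma antitoneOn_zpow_add_rpow (H : ℤ) {c γ : ℝ} (hc : 0 ≤ c) (hγ : γ ≤ 0) :
    AntitoneOn (fun x : ℝ => (x ^ H + c) ^ (γ / H)) (Set.Ioi 0) := by
  intro x hx y hy hxy
  have hx0 : 0 < x := hx
  have hy0 : 0 < y := hy
  rcases lt_trichotomy H 0 with hH | rfl | hH
  · have hpow : y ^ H ≤ x ^ H := by
      rw [← rpow_intCast, ← rpow_intCast]
      exact rpow_le_rpow_of_nonpos hx0 hxy (by exact_mod_cast hH.le)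
    exact rpow_le_rpow (by positivity) (by linarith)
      (div_nonneg_of_nonpos hγ (by exact_mod_cast hH.le))
  · simp
  · have hpow : x ^ H ≤ y ^ H := zpow_le_zpow_left₀ hH.le hx0.le hxy
    exact rpow_le_rpow_of_nonpos (by positivity) (by linarith)
      (div_nonpos_of_nonpos_of_nonneg hγ (by exact_mod_cast hH.le))

lemma exists_mul_rpow_mul_exp_le {f : ℝ → ℝ} {c δ κ : ℝ} (hf : AntitoneOn f (Set.Ioi 0))
    (hf0 : ∀ x, 0 < x → 0 ≤ f x) (hδ : 0 < δ) (hκ : 0 < κ) :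
    ∃ C > 0, ∀ x y, δ ≤ x → x ≤ y →
      f y * y ^ c * exp (-κ * y) ≤
        C * exp (-(κ / 2) * (y - x)) * (f x * x ^ c * exp (-κ * x)) := by
  obtain ⟨C, hC, hpow⟩ := exists_rpow_le_mul_exp_mul_rpow c hδ (half_pos hκ)
  refine ⟨C, hC, fun x y hx hxy => ?_⟩
  have hx0 : 0 < x := by linarith
  have hy0 : 0 < y := by linarith
  calc f y * y ^ c * exp (-κ * y)
      ≤ f x * (C * exp (κ / 2 * (y - x)) * x ^ c) * exp (-κ * y) := by
        gcongr
        · exact hf0 x hx0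
        · exact hf (Set.mem_Ioi.2 hx0) (Set.mem_Ioi.2 hy0) hxy
        · exact hpow x y hx hxy
    _ = C * exp (κ / 2 * (y - x) + -κ * y) * (f x * x ^ c) := by rw [exp_add]; ring
    _ = C * exp (-(κ / 2) * (y - x) + -κ * x) * (f x * x ^ c) := by ring_nf
    _ = C * exp (-(κ / 2) * (y - x)) * (f x * x ^ c * exp (-κ * x)) := by rw [exp_add]; ring

lemma exists_le_mul_exp_pow_mul_of_antitoneOn {f : ℝ → ℝ} {c δ κ : ℝ}
    (hf : AntitoneOn f (Set.Ioi 0)) (hf0 : ∀ x, 0 < x → 0 ≤ f x) (hδ : 0 < δ) (hκ : 0 < κ) :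
    ∃ C > 0, ∀ i j : ℕ, i ≤ j →
      f (δ + j / 2) * (δ + j / 2) ^ c * exp (-κ * (δ + j / 2)) ≤
        C * exp (-(κ / 4)) ^ (j - i) *
          (f (δ + i / 2) * (δ + i / 2) ^ c * exp (-κ * (δ + i / 2))) := by
  obtain ⟨C, hC, hdecay⟩ := exists_mul_rpow_mul_exp_le (c := c) hf hf0 hδ hκ
  refine ⟨C, hC, fun i j hij => ?_⟩
  have hij' : (i : ℝ) ≤ j := by exact_mod_cast hij
  have hexponent : ((j : ℝ) - i) * -(κ / 4) = -(κ / 2) * (δ + j / 2 - (δ + i / 2)) := by ring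
  rw [← exp_nat_mul, Nat.cast_sub hij, hexponent]
  exact hdecay _ _ (by linarith [(i.cast_nonneg : (0 : ℝ) ≤ i)]) (by linarith)

lemma sum_Ico_one_div_mul_le {m : ℕ → ℝ} {C r : ℝ} (hm : ∀ j, 0 < m j)
    (hr0 : 0 ≤ r) (hr1 : r < 1)
    (hdecay : ∀ i j, i ≤ j → m j ≤ C * r ^ (j - i) * m i) (j : ℕ) :
    (∑ i ∈ Ico 1 j, 1 / m i) * m j ≤ C * (r / (1 - r)) := by
  have hC : 0 ≤ C := by
    have := hdecay j j le_rfl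
    rw [Nat.sub_self, pow_zero, mul_one] at this
    nlinarith [hm j]
  calc (∑ i ∈ Ico 1 j, 1 / m i) * m j = ∑ i ∈ Ico 1 j, m j / m i := by
        rw [sum_mul]; exact sum_congr rfl fun i _ => by ring
    _ ≤ ∑ i ∈ Ico 1 j, C * r ^ (j - i) := sum_le_sum fun i hi => by
        rw [div_le_iff₀ (hm i)]; exact hdecay i j (mem_Ico.1 hi).2.le
    _ = C * ∑ i ∈ Ico 1 j, r ^ i := by
        rw [← mul_sum, sum_Ico_reflect (fun i => r ^ i) 1 (Nat.le_succ j)]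
        rcases j with _ | j <;> simp
    _ ≤ C * (r / (1 - r)) := by
        gcongr; simpa using geom_sum_Ico_le_of_lt_one (m := 1) (n := j) hr0 hr1

lemma mul_tsum_mul_le {m M p : ℕ → ℝ} {C w s : ℝ} (hm : ∀ j, 0 < m j)
    (hM : ∀ j, 0 ≤ M j) (hMm : ∀ j, M j * m j ≤ C) (hw : 0 ≤ w) (hs0 : 0 ≤ s) (hs1 : s < 1)
    (hp : ∀ j, p j = w * s ^ j * m j) (k : ℕ) :
    m k * ∑' j, M (k + 1 + j) * p (k + 1 + j) ≤ C * (s / (1 - s)) * p k := by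
  have hbound : ∀ j, M (k + 1 + j) * p (k + 1 + j) ≤ C * w * s ^ (k + 1) * s ^ j := fun j => by
    calc M (k + 1 + j) * p (k + 1 + j)
        = M (k + 1 + j) * m (k + 1 + j) * (w * s ^ (k + 1) * s ^ j) := by rw [hp, pow_add]; ring
      _ ≤ C * (w * s ^ (k + 1) * s ^ j) := by gcongr; exact hMm _
      _ = C * w * s ^ (k + 1) * s ^ j := by ring
  have hgeom : Summable fun j => C * w * s ^ (k + 1) * s ^ j :=
    (summable_geometric_of_lt_one hs0 hs1).mul_left _
  have hnonneg : ∀ j, 0 ≤ M (k + 1 + j) * p (k + 1 + j) := fun j => by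
    rw [hp]; exact mul_nonneg (hM _) (by have := hm (k + 1 + j); positivity)
  calc m k * ∑' j, M (k + 1 + j) * p (k + 1 + j)
      ≤ m k * ∑' j, C * w * s ^ (k + 1) * s ^ j := by
        refine mul_le_mul_of_nonneg_left ?_ (hm k).le
        exact (Summable.of_nonneg_of_le hnonneg hbound hgeom).tsum_le_tsum hbound hgeom
    _ = C * (s / (1 - s)) * p k := by
        rw [tsum_mul_left, tsum_geometric_of_lt_one hs0 hs1, hp k, pow_succ]
        field_simp

theorem stmt_10_general (a b K Z ε δ : ℝ) (H : ℤ) (p m M : ℕ → ℝ)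
    (ha : 0 < a) (hb : 0 < b) (hK : 0 < K) (hZ : 0 < Z) (hδ : 0 < δ)
    (hε1 : ε ≤ 1)
    (hp : ∀ k : ℕ, p k = Z * ((δ + k / 2) ^ H + K ^ H) ^ (a * (ε - 1) / (H : ℝ))
        * (δ + k / 2) ^ (a - 1) * Real.exp (-(δ + k / 2) / b))
    (hm : ∀ k : ℕ, m k = p k * Real.exp ((δ + k / 2) / (2 * b)))
    (hM : ∀ j : ℕ, M j = ∑ i ∈ Finset.Ico 1 j, 1 / m i) :
    ∃ C : ℝ, 0 < C ∧ ∀ k : ℕ,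
      m k * (∑' j : ℕ, M (k + 1 + j) * p (k + 1 + j)) ≤ C * p k := by
  set f : ℝ → ℝ := fun y => Z * (y ^ H + K ^ H) ^ (a * (ε - 1) / (H : ℝ))
  set r := exp (-(1 / (2 * b) / 4))
  set s := exp (-(1 / (4 * b)))
  have hf : AntitoneOn f (Set.Ioi 0) := fun x hx y hy hxy =>
    mul_le_mul_of_nonneg_left (antitoneOn_zpow_add_rpow H (zpow_pos hK H).le
      (mul_nonpos_of_nonneg_of_nonpos ha.le (by linarith)) hx hy hxy) hZ.le
  have hf0 : ∀ y, 0 < y → 0 ≤ f y := fun y hy => by have := zpow_pos hK H; positivity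
  have hmf : ∀ k : ℕ,
      m k = f (δ + k / 2) * (δ + k / 2) ^ (a - 1) * exp (-(1 / (2 * b)) * (δ + k / 2)) := by
    intro k
    rw [hm, hp, mul_assoc _ (exp _), ← exp_add]
    congr 2; field_simp; ring
  have hmpos : ∀ k, 0 < m k := fun k => by
    rw [hm, hp]; have := zpow_pos hK H; have : (0 : ℝ) < δ + k / 2 := by positivity
    positivity
  have hpm : ∀ k : ℕ, p k = exp (-δ / (2 * b)) * s ^ k * m k := fun k => by
    have hcancel : exp (-δ / (2 * b) + k * -(1 / (4 * b))) * exp ((δ + k / 2) / (2 * b)) = 1 := by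
      rw [← exp_add, exp_eq_one_iff]; field_simp; ring
    rw [hm, ← exp_nat_mul, ← exp_add]
    linear_combination (-p k) * hcancel
  obtain ⟨C, hC, hdecay⟩ := exists_le_mul_exp_pow_mul_of_antitoneOn (c := a - 1) hf hf0 hδ
    (show 0 < 1 / (2 * b) by positivity)
  have hr : r < 1 := exp_lt_one_iff.2 (neg_neg_of_pos (by positivity))
  have hs : s < 1 := exp_lt_one_iff.2 (neg_neg_of_pos (by positivity))
  have hMm : ∀ j, M j * m j ≤ C * (r / (1 - r)) := fun j => by
    rw [hM]
    refine sum_Ico_one_div_mul_le hmpos (exp_pos _).le hr (fun i j hij => ?_) j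
    rw [hmf, hmf]; exact hdecay i j hij
  have hMnonneg : ∀ j, 0 ≤ M j := fun j =>
    hM j ▸ sum_nonneg fun i _ => (one_div_pos.2 (hmpos i)).le
  refine ⟨_, ?_, mul_tsum_mul_le hmpos hMnonneg hMm (exp_pos _).le (exp_pos _).le hs hpm⟩
  have := sub_pos.2 hr; have := sub_pos.2 hs
  positivity

theorem stmt_10 (a b K Z ε δ : ℝ) (H : ℤ) (p m M : ℕ → ℝ)
    (ha : 0 < a) (hb : 0 < b) (hK : 0 < K) (hZ : 0 < Z) (hδ : 0 < δ)
    (hε0 : 0 < ε) (hε1 : ε ≤ 1) (hH : H ≠ 0)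
    (hp : ∀ k : ℕ, p k = Z * ((δ + k / 2) ^ H + K ^ H) ^ (a * (ε - 1) / (H : ℝ))
        * (δ + k / 2) ^ (a - 1) * Real.exp (-(δ + k / 2) / b))
    (hm : ∀ k : ℕ, m k = p k * Real.exp ((δ + k / 2) / (2 * b)))
    (hM : ∀ j : ℕ, M j = ∑ i ∈ Finset.Ico 1 j, 1 / m i) :
    ∃ C : ℝ, 0 < C ∧ ∀ k : ℕ,
      m k * (∑' j : ℕ, M (k + 1 + j) * p (k + 1 + j)) ≤ C * p k :=
  stmt_10_general a b K Z ε δ H p m M ha hb hK hZ hδ hε1 hp hm hM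
end
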